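/- Every 6-regular graph with at least 14 vertices has an internal partition: a partition of its vertex set into two nonempty parts A, B such that every vertex of A has at least 3 neighbors in A and every vertex of B has at least 3 neighbors in B. -/

import Mathlib

open Finset

open scoped Classical in
noncomputable def degIn {V : Type*} (G : SimpleGraph V) [DecidableRel G.Adj] (S : Finset V) (x : V) : ℕ :=
  (S.filter fun y => G.Adj x y).card

/-!
Put `t = ⌊(n - 2) / 2⌋ ≥ 6` and let `M` minimise the number of edges between `M` and `Mᶜ` among the
sets with `t ≤ |M| ≤ n - t`. If `t < |M| < n - t`, moving one vertex across keeps the size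
admissible, so by minimality every vertex has at least half, i.e. three, of its neighbours on its
own side.

Otherwise, up to complementation, `|M| = t`. Minimality still bounds the number of neighbours in
`M` of an outside vertex by three, and a vertex with exactly three could be added to `M` to give an
interior minimiser; so all have at most two. If some `x ∈ M` has at most two neighbours in `M`,
move it out, and let the outside `S` greedily absorb vertices with at least four neighbours in it.
Each absorption lowers the cut by at least two, so the cut stays at most `2 |Sᶜ| + 4 = 12` when
four vertices are left, too few for all four to have three neighbours in `S` and one of them four.
This starting bound fails only when `n = 2t + 3` and `x` has exactly two neighbours in `M`. Then
the cut, being even, forces every outside vertex to have exactly two neighbours in `M`; swapping `x`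
with an outside non-neighbour `y` gives another minimiser of size `t`, whence `y` has the same four
outside neighbours as `x`. Each of those four is then adjacent to all `t - 1 ≥ 5` outside
non-neighbours of `x`, although it has only four outside neighbours.
-/

namespace SimpleGraph

section degIn

variable {V : Type*} (G : SimpleGraph V) [DecidableRel G.Adj]

theorem degIn_mono {S T : Finset V} (h : S ⊆ T) (x : V) : degIn G S x ≤ degIn G T x :=
  card_le_card (filter_subset_filter _ h)

theorem degIn_lt_card {S : Finset V} {x : V} (hx : x ∈ S) : degIn G S x < #S :=
  card_lt_card (filter_ssubset.2 ⟨x, hx, G.irrefl⟩)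

theorem sum_degIn_comm (S T : Finset V) : ∑ y ∈ T, degIn G S y = ∑ x ∈ S, degIn G T x := by
  simp only [degIn, card_filter]
  rw [sum_comm]
  exact sum_congr rfl fun x _ => sum_congr rfl fun y _ => if_congr (G.adj_comm y x) rfl rfl

theorem card_filter_adj_eq_degIn (S : Finset V) (x : V) : #{y ∈ S | G.Adj y x} = degIn G S x :=
  congr_arg card (filter_congr fun _ _ => G.adj_comm _ _)

variable [DecidableEq V]

theorem degIn_insert {S : Finset V} {y : V} (hy : y ∉ S) (z : V) :
    degIn G (insert y S) z = degIn G S z + if G.Adj z y then 1 else 0 := by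
  rw [degIn, filter_insert]
  split_ifs with h
  · exact card_insert_of_notMem fun hmem => hy (mem_filter.1 hmem).1
  · rfl

theorem degIn_insert_of_not_adj {S : Finset V} {y z : V} (h : ¬ G.Adj z y) :
    degIn G (insert y S) z = degIn G S z := by
  rw [degIn, filter_insert, if_neg h, degIn]

theorem degIn_erase_of_not_adj {S : Finset V} {x z : V} (h : ¬ G.Adj z x) :
    degIn G (S.erase x) z = degIn G S z := by
  rw [degIn, filter_erase, erase_eq_of_notMem fun hmem => h (mem_filter.1 hmem).2, degIn]

theorem even_sum_degIn_self (S : Finset V) : Even (∑ v ∈ S, degIn G S v) := by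
  induction S using Finset.induction_on with
  | empty => simp
  | @insert a S ha ih =>
    have hS : ∑ v ∈ S, degIn G (insert a S) v = ∑ v ∈ S, degIn G S v + degIn G S a := by
      rw [sum_congr rfl fun v _ => G.degIn_insert ha v, sum_add_distrib, ← card_filter,
        card_filter_adj_eq_degIn]
    rw [sum_insert ha, hS, G.degIn_insert_of_not_adj (G.irrefl)]
    obtain ⟨m, hm⟩ := ih
    exact ⟨degIn G S a + m, by omega⟩

end degIn

variable {V : Type*} [Fintype V] [DecidableEq V] (G : SimpleGraph V) [DecidableRel G.Adj]

theorem degIn_add_degIn_compl (S : Finset V) (x : V) :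
    degIn G S x + degIn G Sᶜ x = G.degree x := by
  rw [← card_neighborFinset_eq_degree, neighborFinset_eq_filter, degIn, degIn, card_filter,
    card_filter, card_filter, sum_add_sum_compl]

noncomputable def cutSize (S : Finset V) : ℕ := ∑ y ∈ Sᶜ, degIn G S y

theorem cutSize_compl (S : Finset V) : G.cutSize Sᶜ = G.cutSize S := by
  rw [cutSize, cutSize, compl_compl, sum_degIn_comm]

theorem cutSize_insert {S : Finset V} {y : V} (hy : y ∉ S) :
    G.cutSize (insert y S) + degIn G S y = G.cutSize S + degIn G Sᶜ y := by
  have hrest : ∑ z ∈ Sᶜ.erase y, degIn G (insert y S) z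
      = ∑ z ∈ Sᶜ.erase y, degIn G S z + degIn G Sᶜ y := by
    rw [sum_congr rfl fun z _ => G.degIn_insert hy z, sum_add_distrib, ← card_filter,
      card_filter_adj_eq_degIn, G.degIn_erase_of_not_adj (G.irrefl)]
  rw [cutSize, cutSize, compl_insert, hrest, ← sum_erase_add _ _ (mem_compl.2 hy)]
  ring

theorem cutSize_erase {S : Finset V} {x : V} (hx : x ∈ S) :
    G.cutSize (S.erase x) + degIn G Sᶜ x = G.cutSize S + degIn G S x := by
  have h := G.cutSize_insert (notMem_compl.2 hx)
  rwa [← compl_erase, cutSize_compl, cutSize_compl, compl_compl] at h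

theorem cutSize_insert_erase {S : Finset V} {x y : V} (hx : x ∈ S) (hy : y ∉ S)
    (hxy : ¬ G.Adj x y) :
    G.cutSize (insert y (S.erase x)) + degIn G Sᶜ x + degIn G S y
      = G.cutSize S + degIn G S x + degIn G Sᶜ y := by
  have hyx : ¬ G.Adj y x := fun h => hxy h.symm
  have h := G.cutSize_insert (S := S.erase x) fun h => hy (mem_of_mem_erase h)
  rw [compl_erase, G.degIn_insert_of_not_adj hyx, G.degIn_erase_of_not_adj hyx] at h
  have := G.cutSize_erase hx
  omega

theorem even_cutSize {d : ℕ} (hreg : G.IsRegularOfDegree d) (hd : Even d) (S : Finset V) :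
    Even (G.cutSize S) := by
  have hsum : G.cutSize S + ∑ y ∈ Sᶜ, degIn G Sᶜ y = #Sᶜ * d := by
    rw [cutSize, ← sum_add_distrib, sum_congr rfl fun y _ => G.degIn_add_degIn_compl S y,
      sum_congr rfl fun y _ => hreg.degree_eq y, sum_const, smul_eq_mul]
  have hdeg : Even (#Sᶜ * d) := hd.mul_left _
  rw [← hsum] at hdeg
  exact (Nat.even_add.1 hdeg).2 (G.even_sum_degIn_self Sᶜ)

def IsMinCut (t : ℕ) (M : Finset V) : Prop :=
  ∀ C : Finset V, t ≤ #C → #C + t ≤ Fintype.card V → G.cutSize M ≤ G.cutSize C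

theorem exists_isMinCut {t : ℕ} (ht : 2 * t ≤ Fintype.card V) :
    ∃ M : Finset V, t ≤ #M ∧ #M + t ≤ Fintype.card V ∧ G.IsMinCut t M := by
  obtain ⟨M₀, -, hM₀⟩ := exists_subset_card_eq (s := (univ : Finset V)) (n := t)
    (by rw [card_univ]; omega)
  obtain ⟨M, hM, hmin⟩ := exists_min_image {C : Finset V | t ≤ #C ∧ #C + t ≤ Fintype.card V}
    G.cutSize ⟨M₀, by simp only [mem_filter, mem_univ, true_and, hM₀]; omega⟩
  simp only [mem_filter, mem_univ, true_and] at hM hmin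
  exact ⟨M, hM.1, hM.2, fun C h₁ h₂ => hmin C ⟨h₁, h₂⟩⟩

def IsInternalPartition (A : Finset V) : Prop :=
  A.Nonempty ∧ Aᶜ.Nonempty ∧ (∀ x ∈ A, 3 ≤ degIn G A x) ∧ (∀ y ∈ Aᶜ, 3 ≤ degIn G Aᶜ y)

variable {G} {t : ℕ} {M : Finset V}

theorem IsMinCut.compl (hM : G.IsMinCut t M) : G.IsMinCut t Mᶜ :=
  fun C h₁ h₂ => G.cutSize_compl M ▸ hM C h₁ h₂

theorem IsMinCut.of_cutSize_eq {M' : Finset V} (hM : G.IsMinCut t M)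
    (h : G.cutSize M' = G.cutSize M) : G.IsMinCut t M' :=
  fun C h₁ h₂ => h ▸ hM C h₁ h₂

theorem IsMinCut.degIn_compl_le_degIn (hM : G.IsMinCut t M) {x : V} (hx : x ∈ M)
    (h₁ : t < #M) (h₂ : #M + t ≤ Fintype.card V) : degIn G Mᶜ x ≤ degIn G M x := by
  have hmin := hM (M.erase x) (by rw [card_erase_of_mem hx]; omega)
    (by rw [card_erase_of_mem hx]; omega)
  have := G.cutSize_erase hx
  omega

theorem IsMinCut.degIn_le_degIn_compl (hM : G.IsMinCut t M) {y : V} (hy : y ∉ M)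
    (h₁ : t ≤ #M) (h₂ : #M + t < Fintype.card V) : degIn G M y ≤ degIn G Mᶜ y := by
  have := card_le_univ M
  simpa using hM.compl.degIn_compl_le_degIn (mem_compl.2 hy) (by rw [card_compl]; omega)
    (by rw [card_compl]; omega)

theorem isInternalPartition_of_forall_degIn_le_three (hreg : G.IsRegularOfDegree 6)
    {S : Finset V} (hS : S.Nonempty) (hSc : Sᶜ.Nonempty) (hin : ∀ x ∈ S, 3 ≤ degIn G S x)
    (hout : ∀ y ∈ Sᶜ, degIn G S y ≤ 3) : G.IsInternalPartition S := by
  refine ⟨hS, hSc, hin, fun y hy => ?_⟩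
  have := G.degIn_add_degIn_compl S y
  have := hout y hy
  have := hreg.degree_eq y
  omega

theorem IsMinCut.isInternalPartition (hreg : G.IsRegularOfDegree 6) (hM : G.IsMinCut t M)
    (h₁ : t < #M) (h₂ : #M + t < Fintype.card V) : G.IsInternalPartition M := by
  have hMc : 0 < #Mᶜ := by rw [card_compl]; omega
  refine isInternalPartition_of_forall_degIn_le_three hreg (card_pos.1 (by omega))
    (card_pos.1 hMc) (fun x hx => ?_) fun y hy => ?_
  · have := hM.degIn_compl_le_degIn hx h₁ h₂.le
    have := G.degIn_add_degIn_compl M x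
    have := hreg.degree_eq x
    omega
  · have := hM.degIn_le_degIn_compl (mem_compl.1 hy) h₁.le h₂
    have := G.degIn_add_degIn_compl M y
    have := hreg.degree_eq y
    omega

theorem exists_isInternalPartition_of_cutSize_le (hreg : G.IsRegularOfDegree 6) {S : Finset V}
    (hS : S.Nonempty) (hin : ∀ x ∈ S, 3 ≤ degIn G S x) (hcard : 4 ≤ #Sᶜ)
    (hcut : G.cutSize S ≤ 2 * #Sᶜ + 4) : ∃ A, G.IsInternalPartition A := by
  by_cases hout : ∀ y ∈ Sᶜ, degIn G S y ≤ 3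
  · exact ⟨S, isInternalPartition_of_forall_degIn_le_three hreg hS (card_pos.1 (by omega)) hin
      hout⟩
  push Not at hout
  obtain ⟨v, hv, hv4⟩ := hout
  have hvS : v ∉ S := mem_compl.1 hv
  have hcard' : #(insert v S)ᶜ + 1 = #Sᶜ := by rw [compl_insert, card_erase_add_one hv]
  have hsplit := G.degIn_add_degIn_compl S v
  have hdeg := hreg.degree_eq v
  obtain hbig | hfour : 4 < #Sᶜ ∨ #Sᶜ = 4 := by omega
  · refine exists_isInternalPartition_of_cutSize_le hreg (insert_nonempty v S) (fun u hu => ?_)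
      (by omega) (by have := G.cutSize_insert hvS; omega)
    rcases mem_insert.1 hu with rfl | huS
    · rw [G.degIn_insert_of_not_adj (G.irrefl)]
      omega
    · exact (hin u huS).trans (G.degIn_mono (subset_insert v S) u)
  · have hlow : ∀ u ∈ Sᶜ, 3 ≤ degIn G S u := fun u hu => by
      have := G.degIn_lt_card hu
      have := G.degIn_add_degIn_compl S u
      have := hreg.degree_eq u
      omega
    have hsum : ∑ _u ∈ Sᶜ, 3 < G.cutSize S := sum_lt_sum hlow ⟨v, hv, by omega⟩
    rw [sum_const, smul_eq_mul] at hsum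
    omega
termination_by #Sᶜ
decreasing_by omega

theorem exists_isInternalPartition_of_cutSize_add_le (hreg : G.IsRegularOfDegree 6)
    (hout : ∀ y ∈ Mᶜ, degIn G M y ≤ 2) {x : V} (hx : x ∈ M) (hx2 : degIn G M x ≤ 2)
    (hcard : 5 ≤ #M) (hcut : G.cutSize M + 2 * degIn G M x ≤ 2 * #M + 8) :
    ∃ A, G.IsInternalPartition A := by
  have hxMc : x ∉ Mᶜ := notMem_compl.2 hx
  have hcut' := G.cutSize_insert hxMc
  rw [compl_compl, cutSize_compl] at hcut'
  have hcard' : #(insert x Mᶜ)ᶜ + 1 = #M := by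
    rw [compl_insert, compl_compl, card_erase_add_one hx]
  have := G.degIn_add_degIn_compl M x
  have := hreg.degree_eq x
  refine exists_isInternalPartition_of_cutSize_le hreg (insert_nonempty x Mᶜ) (fun u hu => ?_)
    (by omega) (by omega)
  rcases mem_insert.1 hu with rfl | huM
  · rw [G.degIn_insert_of_not_adj (G.irrefl)]
    omega
  · have := G.degIn_add_degIn_compl M u
    have := hreg.degree_eq u
    have := hout u huM
    have := G.degIn_mono (subset_insert x Mᶜ) u
    omega

theorem IsMinCut.exists_isInternalPartition_or_degIn_le_two (hreg : G.IsRegularOfDegree 6)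
    (hM : G.IsMinCut t M) (hcard : #M = t) (hn : 2 * t + 2 ≤ Fintype.card V) :
    (∃ A, G.IsInternalPartition A) ∨ ∀ y ∈ Mᶜ, degIn G M y ≤ 2 := by
  by_cases hout : ∀ y ∈ Mᶜ, degIn G M y ≤ 2
  · exact Or.inr hout
  push Not at hout
  obtain ⟨y, hy, hy3⟩ := hout
  have hyM : y ∉ M := mem_compl.1 hy
  have hle := hM.degIn_le_degIn_compl hyM hcard.ge (by omega)
  have := G.degIn_add_degIn_compl M y
  have := hreg.degree_eq y
  have := G.cutSize_insert hyM
  have hM' : G.IsMinCut t (insert y M) := hM.of_cutSize_eq (by omega)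
  have hcard' := card_insert_of_notMem hyM
  exact Or.inl ⟨_, hM'.isInternalPartition hreg (by omega) (by omega)⟩

theorem IsMinCut.exists_isInternalPartition_or_neighbors_subset (hreg : G.IsRegularOfDegree 6)
    (hM : G.IsMinCut t M) (hcard : #M = t) (hn : 2 * t + 2 ≤ Fintype.card V)
    (hout : ∀ y ∈ Mᶜ, degIn G M y = 2) {x y : V} (hx : x ∈ M) (hx2 : degIn G M x = 2)
    (hy : y ∈ Mᶜ) (hxy : ¬ G.Adj x y) :
    (∃ A, G.IsInternalPartition A) ∨ {z ∈ Mᶜ | G.Adj y z} ⊆ {z ∈ Mᶜ | G.Adj x z} := by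
  have hyM : y ∉ M := mem_compl.1 hy
  have hyM' : y ∉ M.erase x := fun h => hyM (mem_of_mem_erase h)
  have hcard' : #(insert y (M.erase x)) = t := by
    rw [card_insert_of_notMem hyM', card_erase_add_one hx, hcard]
  have hcut : G.cutSize (insert y (M.erase x)) = G.cutSize M := by
    have := G.cutSize_insert_erase hx hyM hxy
    have := G.degIn_add_degIn_compl M x
    have := G.degIn_add_degIn_compl M y
    have := hreg.degree_eq x
    have := hreg.degree_eq y
    have := hout y hy
    omega
  refine ((hM.of_cutSize_eq hcut).exists_isInternalPartition_or_degIn_le_two hreg hcard'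
    hn).imp_right fun hout' z hz => ?_
  obtain ⟨hzM, hyz⟩ := mem_filter.1 hz
  refine mem_filter.2 ⟨hzM, ?_⟩
  by_contra hxz
  have hzM' : z ∉ insert y (M.erase x) := by
    rw [mem_insert, mem_erase, not_or]
    exact ⟨(G.ne_of_adj hyz).symm, fun h => mem_compl.1 hzM h.2⟩
  have hz3 : degIn G (insert y (M.erase x)) z = 3 := by
    rw [G.degIn_insert hyM', if_pos hyz.symm, G.degIn_erase_of_not_adj fun h => hxz h.symm,
      hout z hzM]
  have := hout' z (mem_compl.2 hzM')
  omega

theorem IsMinCut.exists_isInternalPartition_of_degIn_eq_two (hreg : G.IsRegularOfDegree 6)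
    (hM : G.IsMinCut t M) (hcard : #M = t) (ht : 6 ≤ t) (hn : Fintype.card V = 2 * t + 3)
    (hout : ∀ y ∈ Mᶜ, degIn G M y = 2) {x : V} (hx : x ∈ M) (hx2 : degIn G M x = 2) :
    ∃ A, G.IsInternalPartition A := by
  by_contra hno
  have hdeg4 : ∀ y, degIn G M y = 2 → #{z ∈ Mᶜ | G.Adj y z} = 4 := fun y hy => by
    have := G.degIn_add_degIn_compl M y
    have := hreg.degree_eq y
    change degIn G Mᶜ y = 4
    omega
  set T := {z ∈ Mᶜ | G.Adj x z}
  have hT : #T = 4 := hdeg4 x hx2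
  have hnbr : ∀ y ∈ Mᶜ \ T, {z ∈ Mᶜ | G.Adj y z} = T := fun y hy => by
    obtain ⟨hyM, hyT⟩ := mem_sdiff.1 hy
    have hxy : ¬ G.Adj x y := fun h => hyT (mem_filter.2 ⟨hyM, h⟩)
    refine eq_of_subset_of_card_le ?_ (by rw [hT, hdeg4 y (hout y hyM)])
    exact (hM.exists_isInternalPartition_or_neighbors_subset hreg hcard (by omega) hout hx hx2
      hyM hxy).resolve_left hno
  obtain ⟨z, hz⟩ : T.Nonempty := card_pos.1 (by omega)
  have hzM : z ∈ Mᶜ := (mem_filter.1 hz).1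
  have hsub : Mᶜ \ T ⊆ {w ∈ Mᶜ | G.Adj z w} := fun y hy => by
    have hzy : z ∈ {w ∈ Mᶜ | G.Adj y w} := (hnbr y hy).symm ▸ hz
    exact mem_filter.2 ⟨(mem_sdiff.1 hy).1, (mem_filter.1 hzy).2.symm⟩
  have := card_le_card hsub
  rw [card_sdiff_of_subset (filter_subset _ _), hT, hdeg4 z (hout z hzM), card_compl] at this
  omega

theorem IsMinCut.exists_isInternalPartition_of_card_eq (hreg : G.IsRegularOfDegree 6)
    (hM : G.IsMinCut t M) (hcard : #M = t) (ht : 6 ≤ t)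
    (hn : Fintype.card V = 2 * t + 2 ∨ Fintype.card V = 2 * t + 3) :
    ∃ A, G.IsInternalPartition A := by
  have hMc : #Mᶜ = Fintype.card V - t := by rw [card_compl, hcard]
  obtain h | hout := hM.exists_isInternalPartition_or_degIn_le_two hreg hcard (by omega)
  · exact h
  by_cases hin : ∀ x ∈ M, 3 ≤ degIn G M x
  · exact ⟨M, isInternalPartition_of_forall_degIn_le_three hreg (card_pos.1 (by omega))
      (card_pos.1 (by omega)) hin fun y hy => (hout y hy).trans (by norm_num)⟩
  push Not at hin
  obtain ⟨x, hx, hx2⟩ := hin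
  have hcutM : G.cutSize M ≤ ∑ _y ∈ Mᶜ, 2 := sum_le_sum hout
  rw [sum_const, smul_eq_mul] at hcutM
  by_cases hcut : G.cutSize M + 2 * degIn G M x ≤ 2 * #M + 8
  · exact exists_isInternalPartition_of_cutSize_add_le hreg hout hx (by omega) (by omega) hcut
  · obtain ⟨k, hk⟩ := G.even_cutSize hreg (by decide) M
    have hn' : Fintype.card V = 2 * t + 3 := by omega
    have hcutM' : G.cutSize M = ∑ _y ∈ Mᶜ, 2 := by rw [sum_const, smul_eq_mul]; omega
    exact hM.exists_isInternalPartition_of_degIn_eq_two hreg hcard ht hn'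
      ((sum_eq_sum_iff_of_le hout).1 hcutM') hx (by omega)

end SimpleGraph

/-- Every 6-regular graph with at least 14 vertices has an internal partition. -/
theorem six_regular_internal_partition {V : Type*} [Fintype V] [DecidableEq V]
    (G : SimpleGraph V) [DecidableRel G.Adj] (hreg : G.IsRegularOfDegree 6) (hn : 14 ≤ Fintype.card V) :
    ∃ A : Finset V, A.Nonempty ∧ Aᶜ.Nonempty ∧
      (∀ x ∈ A, 3 ≤ degIn G A x) ∧ (∀ y ∈ Aᶜ, 3 ≤ degIn G Aᶜ y) := by
  set t := (Fintype.card V - 2) / 2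
  have ht : 6 ≤ t := by omega
  have hn' : Fintype.card V = 2 * t + 2 ∨ Fintype.card V = 2 * t + 3 := by omega
  obtain ⟨M, hlo, hhi, hM⟩ := G.exists_isMinCut (t := t) (by omega)
  obtain hlo | hlo := hlo.eq_or_lt
  · exact hM.exists_isInternalPartition_of_card_eq hreg hlo.symm ht hn'
  obtain hhi | hhi := hhi.lt_or_eq
  · exact ⟨M, hM.isInternalPartition hreg hlo hhi⟩
  · have := card_le_univ M
    exact hM.compl.exists_isInternalPartition_of_card_eq hreg (by rw [card_compl]; omega) ht hn'
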